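/- For every fixed real b ≥ 1, the function a ↦ d(a,b) is monotonically nondecreasing on [1,∞); that is, if 1 ≤ a ≤ a′ then d(a,b) ≤ d(a′,b). -/
import Mathlib


/-- `Nseq a b k` is the `k`-th term (indexed from 0) of the nondecreasing sequence listing,
with multiplicities, all numbers `m*a + n*b` with `m n : ℕ`; equivalently the least `t ≥ 0`
such that there are at least `k+1` pairs `(m,n)` with `m*a + n*b ≤ t`. -/
noncomputable def Nseq (a b : ℝ) (k : ℕ) : ℝ :=
  sInf {t : ℝ | 0 ≤ t ∧ k + 1 ≤ {p : ℕ × ℕ | (p.1 : ℝ) * a + (p.2 : ℝ) * b ≤ t}.ncard}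

/-- `Mseq c d k = min {m*c + n*d : (m+1)*(n+1) ≥ k+1}`. -/
noncomputable def Mseq (c d : ℝ) (k : ℕ) : ℝ :=
  sInf {t : ℝ | ∃ m n : ℕ, k + 1 ≤ (m + 1) * (n + 1) ∧ t = (m : ℝ) * c + (n : ℝ) * d}

/-- `dFun a b = inf {λ > 0 : N_k(1,a) ≤ λ M_k(1,b) for all k}`. -/
noncomputable def dFun (a b : ℝ) : ℝ :=
  sInf {l : ℝ | 0 < l ∧ ∀ k : ℕ, Nseq 1 a k ≤ l * Mseq 1 b k}

lemma setFin {a : ℝ} (ha : 1 ≤ a) (t : ℝ) :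
    {p : ℕ × ℕ | (p.1 : ℝ) * 1 + (p.2 : ℝ) * a ≤ t}.Finite := by
  apply Set.Finite.subset ((Set.finite_Iic ⌊t⌋₊).prod (Set.finite_Iic ⌊t⌋₊))
  rintro ⟨m, n⟩ h
  simp only [Set.mem_setOf_eq, mul_one] at h
  have h0 : (0:ℝ) ≤ (n:ℝ) * a := by positivity
  have hn' : (n:ℝ) ≤ (n:ℝ) * a := by nlinarith [Nat.cast_nonneg (α := ℝ) n]
  have hm : (m:ℝ) ≤ t := by linarith
  have hn : (n:ℝ) ≤ t := by linarith [Nat.cast_nonneg (α := ℝ) m]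
  exact ⟨Nat.le_floor hm, Nat.le_floor hn⟩

lemma nseq_bdd (a : ℝ) (k : ℕ) :
    BddBelow {t : ℝ | 0 ≤ t ∧ k + 1 ≤ {p : ℕ × ℕ | (p.1 : ℝ) * 1 + (p.2 : ℝ) * a ≤ t}.ncard} :=
  ⟨0, fun _ ht => ht.1⟩

lemma card_le {a : ℝ} (ha : 1 ≤ a) (m n : ℕ) :
    (m + 1) * (n + 1) ≤ {p : ℕ × ℕ | (p.1 : ℝ) * 1 + (p.2 : ℝ) * a ≤ (m:ℝ) * 1 + (n:ℝ) * a}.ncard := by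
  have hsub : (↑(Finset.Iic m ×ˢ Finset.Iic n) : Set (ℕ × ℕ)) ⊆
      {p : ℕ × ℕ | (p.1 : ℝ) * 1 + (p.2 : ℝ) * a ≤ (m:ℝ) * 1 + (n:ℝ) * a} := by
    rintro ⟨i, j⟩ hij
    simp only [Finset.coe_product, Set.mem_prod, Finset.mem_coe, Finset.mem_Iic] at hij
    have h1 : (i:ℝ) ≤ m := Nat.cast_le.mpr hij.1
    have h2 : (j:ℝ) ≤ n := Nat.cast_le.mpr hij.2
    have h3 : (j:ℝ) * a ≤ (n:ℝ) * a := by nlinarith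
    simp only [Set.mem_setOf_eq]
    linarith
  calc (m + 1) * (n + 1) = (↑(Finset.Iic m ×ˢ Finset.Iic n) : Set (ℕ × ℕ)).ncard := by
        rw [Set.ncard_coe_finset, Finset.card_product, Nat.card_Iic, Nat.card_Iic]
    _ ≤ _ := Set.ncard_le_ncard hsub (setFin ha _)

/-- Membership bound: `Nseq 1 a k ≤ m + n*a` whenever `(m+1)*(n+1) ≥ k+1`. -/
lemma nseq_le {a : ℝ} (ha : 1 ≤ a) {k m n : ℕ} (hk : k + 1 ≤ (m + 1) * (n + 1)) :
    Nseq 1 a k ≤ (m:ℝ) * 1 + (n:ℝ) * a := by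
  apply csInf_le (nseq_bdd a k)
  refine ⟨by positivity, le_trans hk (card_le ha m n)⟩

/-- The defining set of `Nseq 1 a k` is nonempty (contains `k`). -/
lemma nseq_nonempty {a : ℝ} (ha : 1 ≤ a) (k : ℕ) :
    Set.Nonempty {t : ℝ | 0 ≤ t ∧ k + 1 ≤ {p : ℕ × ℕ | (p.1 : ℝ) * 1 + (p.2 : ℝ) * a ≤ t}.ncard} := by
  refine ⟨(k:ℝ) * 1 + (0:ℕ) * a, by positivity, ?_⟩
  have := card_le ha k 0
  omega

lemma nseq_mono {a a' : ℝ} (ha : 1 ≤ a) (haa : a ≤ a') (k : ℕ) :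
    Nseq 1 a k ≤ Nseq 1 a' k := by
  have ha' : 1 ≤ a' := le_trans ha haa
  apply csInf_le_csInf (nseq_bdd a k) (nseq_nonempty ha' k)
  rintro t ⟨ht0, htc⟩
  refine ⟨ht0, le_trans htc (Set.ncard_le_ncard ?_ (setFin ha t))⟩
  rintro ⟨i, j⟩ hij
  simp only [Set.mem_setOf_eq] at hij ⊢
  have : (j:ℝ) * a ≤ (j:ℝ) * a' := by
    apply mul_le_mul_of_nonneg_left haa (Nat.cast_nonneg j)
  linarith

lemma mseq_nonempty (b : ℝ) (k : ℕ) :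
    Set.Nonempty {t : ℝ | ∃ m n : ℕ, k + 1 ≤ (m + 1) * (n + 1) ∧ t = (m : ℝ) * 1 + (n : ℝ) * b} :=
  ⟨(k:ℝ) * 1 + (0:ℕ) * b, k, 0, by omega, rfl⟩

lemma nseq_le_mul_mseq {a' b : ℝ} (ha' : 1 ≤ a') (hb : 1 ≤ b) (k : ℕ) :
    Nseq 1 a' k ≤ a' * Mseq 1 b k := by
  have hpos : (0:ℝ) < a' := lt_of_lt_of_le one_pos ha'
  rw [← div_le_iff₀' hpos]
  apply le_csInf (mseq_nonempty b k)
  rintro t ⟨m, n, hk, rfl⟩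
  rw [div_le_iff₀ hpos]
  have h1 : Nseq 1 a' k ≤ (m:ℝ) * 1 + (n:ℝ) * a' := nseq_le ha' hk
  have h2 : (m:ℝ) * 1 + (n:ℝ) * a' ≤ ((m:ℝ) * 1 + (n:ℝ) * b) * a' := by
    have hm : (0:ℝ) ≤ (m:ℝ) := Nat.cast_nonneg m
    have hn : (0:ℝ) ≤ (n:ℝ) := Nat.cast_nonneg n
    have e1 : (m:ℝ) ≤ (m:ℝ) * a' := le_mul_of_one_le_right hm ha'
    have e2 : (n:ℝ) * a' ≤ (n:ℝ) * b * a' :=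
      mul_le_mul_of_nonneg_right (le_mul_of_one_le_right hn hb) hpos.le
    nlinarith
  linarith

theorem dFun_monotone (b : ℝ) (hb : 1 ≤ b) :
    ∀ a a' : ℝ, 1 ≤ a → a ≤ a' → dFun a b ≤ dFun a' b := by
  intro a a' ha haa
  have ha' : 1 ≤ a' := le_trans ha haa
  apply csInf_le_csInf
  · exact ⟨0, fun l hl => le_of_lt hl.1⟩
  · exact ⟨a', lt_of_lt_of_le one_pos ha', fun k => nseq_le_mul_mseq ha' hb k⟩
  · rintro l ⟨hl0, hl⟩
    exact ⟨hl0, fun k => le_trans (nseq_mono ha haa k) (hl k)⟩
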